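/- arXiv:1402.4037 — 2 statements merged into one kernel-verified Lean document; each statement's English description precedes it below -/
import Mathlib

section
/- Let G = (V,E) and Ĝ = (V,Ê) be finite connected simple graphs on the same vertex set with Ê ⊆ E, let U ⊆ V be self-contained in Ĝ, and let S ⊆ U be a clique of Ĝ. Suppose δ(u,v) = δ̂(u,v) for every pair (u,v) with u ∈ N(S) ∩ U and v ∈ U, where N(S) = {w ∈ V : δ(S,w) ≤ 1} is taken with respect to G. Then for all vertices x, y lying in different connected components of the subgraph of Ĝ induced on U ∖ S, the pair {x,y} is not an edge of G. -/
/-!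
Suppose `x, y ∈ U \ S` are adjacent in `G` and take a shortest `Ĝ`-path from `x` to `y`; by
self-containment it stays in `U`. If it avoids `S`, then `x` and `y` lie in one component of
`Ĝ[U \ S]`. Otherwise it passes through some `s ∈ S`. The vertex `w` just before `s` lies in
`N(S) ∩ U`, so `δ(w, y) = δ̂(w, y) = δ̂(s, y) + 1` while `δ(w, x) = δ̂(x, s) - 1`, and the edge `xy`
of `G` gives `δ̂(s, y) < δ̂(x, s)`. Exchanging `x` and `y` gives the reverse inequality.
-/

open SimpleGraph

/-- Distance from a set of vertices: `δ(S, v) = min_{s ∈ S} δ(s, v)`. -/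
noncomputable def setDist {V : Type*} (G : SimpleGraph V) (S : Set V) (v : V) : ℕ :=
  sInf {d | ∃ s ∈ S, G.dist s v = d}

/-- `N(S) = {w : δ(S, w) ≤ 1}`. -/
noncomputable def nbrSet {V : Type*} (G : SimpleGraph V) (S : Set V) : Set V :=
  {w | setDist G S w ≤ 1}

/-- `U` is self-contained in `G`: every shortest path in `G` between vertices of `U`
stays inside `U`. -/
def SelfContained {V : Type*} (G : SimpleGraph V) (U : Set V) : Prop :=
  ∀ x ∈ U, ∀ y ∈ U, ∀ z : V, G.dist x z + G.dist z y = G.dist x y → z ∈ U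

namespace SimpleGraph

variable {V : Type*} {H : SimpleGraph V} {x y z : V}

lemma Walk.dist_add_dist_of_mem_support [DecidableEq V] {p : H.Walk x y}
    (hp : p.length = H.dist x y) (hz : z ∈ p.support) :
    H.dist x z + H.dist z y = H.dist x y := by
  rw [← length_eq_dist_of_subwalk hp (p.isSubwalk_takeUntil hz),
    ← length_eq_dist_of_subwalk hp (p.isSubwalk_dropUntil hz), ← hp, ← Walk.length_append,
    p.take_spec hz]

lemma Reachable.exists_adj_dist_add_one_eq (h : H.Reachable x z) (hne : x ≠ z) :
    ∃ w, H.Adj w z ∧ H.dist x w + 1 = H.dist x z := by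
  obtain ⟨q, hq⟩ := h.symm.exists_walk_length_eq_dist
  cases q with
  | nil => exact absurd rfl hne
  | @cons _ w _ hzw q =>
    refine ⟨w, hzw.symm, ?_⟩
    rw [dist_comm, ← length_eq_dist_of_subwalk hq (q.isSubwalk_cons hzw), dist_comm, ← hq,
      Walk.length_cons]

end SimpleGraph

lemma mem_nbrSet_of_adj {V : Type*} {G : SimpleGraph V} {S : Set V} {s w : V} (hs : s ∈ S)
    (h : G.Adj s w) : w ∈ nbrSet G S :=
  (Nat.sInf_le (show G.dist s w ∈ {d | ∃ t ∈ S, G.dist t w = d} from ⟨s, hs, rfl⟩)).trans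
    (dist_eq_one_iff_adj.mpr h).le

lemma dist_lt_dist_of_adj_of_dist_add_dist_eq {V : Type*} {G Ghat : SimpleGraph V}
    (hGhat : Ghat.Connected) (hsub : Ghat ≤ G) {U S : Set V} (hU : SelfContained Ghat U)
    (hdist : ∀ u v : V, u ∈ nbrSet G S ∩ U → v ∈ U → G.dist u v = Ghat.dist u v)
    {x y s : V} (hx : x ∈ U) (hy : y ∈ U) (hxy : G.Adj x y) (hs : s ∈ S) (hxs : x ≠ s)
    (hsplit : Ghat.dist x s + Ghat.dist s y = Ghat.dist x y) :
    Ghat.dist s y < Ghat.dist x s := by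
  obtain ⟨w, hws, hxw⟩ := (hGhat x s).exists_adj_dist_add_one_eq hxs
  have hwy : Ghat.dist w y = Ghat.dist s y + 1 := by
    have hle : Ghat.dist w y ≤ Ghat.dist w s + Ghat.dist s y := hGhat.dist_triangle
    have hge : Ghat.dist x y ≤ Ghat.dist x w + Ghat.dist w y := hGhat.dist_triangle
    rw [dist_eq_one_iff_adj.mpr hws] at hle
    omega
  have hwU : w ∈ U := hU x hx y hy w (by omega)
  have hwN : w ∈ nbrSet G S ∩ U := ⟨mem_nbrSet_of_adj hs (hsub hws.symm), hwU⟩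
  calc Ghat.dist s y < Ghat.dist w y := by omega
    _ = G.dist w y := (hdist w y hwN hy).symm
    _ ≤ G.dist w x + G.dist x y := (hGhat.mono hsub).dist_triangle
    _ = Ghat.dist x s := by
      rw [hdist w x hwN hx, SimpleGraph.dist_comm, dist_eq_one_iff_adj.mpr hxy, hxw]

theorem stmt_7_general {V : Type*}
    (G Ghat : SimpleGraph V) (hGhat : Ghat.Connected)
    (hsub : Ghat ≤ G) (U : Set V) (hU : SelfContained Ghat U)
    (S : Set V)
    (hdist : ∀ u v : V, u ∈ nbrSet G S ∩ U → v ∈ U → G.dist u v = Ghat.dist u v)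
    (x y : ↑(U \ S))
    (hxy : (Ghat.induce (U \ S)).connectedComponentMk x ≠
           (Ghat.induce (U \ S)).connectedComponentMk y) :
    ¬ G.Adj ↑x ↑y := by
  classical
  intro hadj
  obtain ⟨x, hxU, hxS⟩ := x
  obtain ⟨y, hyU, hyS⟩ := y
  obtain ⟨p, hp⟩ := (hGhat x y).exists_walk_length_eq_dist
  have hpU : ∀ z ∈ p.support, z ∈ U := fun z hz =>
    hU x hxU y hyU z (p.dist_add_dist_of_mem_support hp hz)
  by_cases hpS : ∃ s ∈ p.support, s ∈ S
  · obtain ⟨s, hsp, hs⟩ := hpS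
    have hsplit := p.dist_add_dist_of_mem_support hp hsp
    have hlt := dist_lt_dist_of_adj_of_dist_add_dist_eq hGhat hsub hU hdist hxU hyU hadj hs
      (ne_of_mem_of_not_mem hs hxS).symm hsplit
    have hsplit' : Ghat.dist y s + Ghat.dist s x = Ghat.dist y x := by
      simpa only [SimpleGraph.dist_comm, add_comm] using hsplit
    have hgt := dist_lt_dist_of_adj_of_dist_add_dist_eq hGhat hsub hU hdist hyU hxU hadj.symm hs
      (ne_of_mem_of_not_mem hs hyS).symm hsplit'
    rw [SimpleGraph.dist_comm (u := s), SimpleGraph.dist_comm (u := y)] at hgt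
    omega
  · push Not at hpS
    exact hxy (ConnectedComponent.sound
      (p.induce (U \ S) fun z hz => ⟨hpU z hz, hpS z hz⟩).reachable)

theorem stmt_7 {V : Type*} [Fintype V]
    (G Ghat : SimpleGraph V) (hG : G.Connected) (hGhat : Ghat.Connected)
    (hsub : Ghat ≤ G) (U : Set V) (hU : SelfContained Ghat U)
    (S : Set V) (hSU : S ⊆ U) (hclique : Ghat.IsClique S)
    (hdist : ∀ u v : V, u ∈ nbrSet G S ∩ U → v ∈ U → G.dist u v = Ghat.dist u v)
    (x y : ↑(U \ S))
    (hxy : (Ghat.induce (U \ S)).connectedComponentMk x ≠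
           (Ghat.induce (U \ S)).connectedComponentMk y) :
    ¬ G.Adj ↑x ↑y :=
  stmt_7_general G Ghat hGhat hsub U hU S hdist x y hxy
end

section
/- Let G = (V,E) be a finite connected simple graph, let U ⊆ V be self-contained in G, and let S ⊆ U. Define W = (N(S) ∩ U) ∖ S and for a ∈ W the cluster B(a) = {x ∈ U ∖ S : δ(a,x) ≤ δ(S,x)}. Then for every a ∈ W and every x ∈ B(a), the vertices a and x belong to the same connected component of the subgraph of G induced on U ∖ S. -/
open SimpleGraph

/-- `W = (N(S) ∩ U) \ S`. -/
noncomputable def Wset {V : Type*} (G : SimpleGraph V) (U S : Set V) : Set V :=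
  (nbrSet G S ∩ U) \ S

/-- The cluster `B(a) = {x ∈ U \ S : δ(a,x) ≤ δ(S,x)}`. -/
noncomputable def cluster {V : Type*} (G : SimpleGraph V) (U S : Set V) (a : V) : Set V :=
  {x ∈ U \ S | G.dist a x ≤ setDist G S x}

/-!
A shortest walk from `a` to `x` stays in `U` because `U` is self-contained. It cannot meet `S`
either: a vertex `z ∈ S` on it would give `δ(S,x) ≤ δ(z,x) < δ(a,z) + δ(z,x) = δ(a,x)`, as
`z ≠ a`, contradicting `x ∈ B(a)`. Hence the walk lifts to the subgraph induced on `U ∖ S`.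
-/

namespace SimpleGraph

variable {V : Type*} {G : SimpleGraph V}

lemma Walk.dist_add_dist_eq_of_length_eq_dist [DecidableEq V] {u v w : V} (p : G.Walk u v)
    (hp : p.length = G.dist u v) (hw : w ∈ p.support) :
    G.dist u w + G.dist w v = G.dist u v := by
  have hsplit : (p.takeUntil w hw).length + (p.dropUntil w hw).length = p.length := by
    rw [← Walk.length_append, p.take_spec hw]
  have htake := dist_le (p.takeUntil w hw)
  have hdrop := dist_le (p.dropUntil w hw)
  have htri := (p.takeUntil w hw).reachable.dist_triangle_left v
  omega

end SimpleGraph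

lemma setDist_le_dist {V : Type*} {G : SimpleGraph V} {S : Set V} {s : V} (hs : s ∈ S)
    (v : V) : setDist G S v ≤ G.dist s v :=
  Nat.sInf_le ⟨s, hs, rfl⟩

theorem stmt_12_general {V : Type*} (G : SimpleGraph V) (hG : G.Connected)
    (U : Set V) (hU : SelfContained G U) (S : Set V)
    (a : V) (ha : a ∈ Wset G U S) (x : V) (hx : x ∈ cluster G U S a) :
    (G.induce (U \ S)).Reachable ⟨a, ⟨ha.1.2, ha.2⟩⟩ ⟨x, hx.1⟩ := by
  obtain ⟨⟨_, haU⟩, haS⟩ := ha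
  obtain ⟨⟨hxU, -⟩, hax⟩ := hx
  classical
  obtain ⟨p, hp⟩ := (hG a x).exists_walk_length_eq_dist
  refine ⟨p.induce (U \ S) fun z hz => ?_⟩
  have hsplit := p.dist_add_dist_eq_of_length_eq_dist hp hz
  refine ⟨hU a haU x hxU z hsplit, fun hzS => ?_⟩
  have hza : 0 < G.dist a z := (hG a z).pos_dist_of_ne (by rintro rfl; exact haS hzS)
  have hSx := setDist_le_dist (G := G) hzS x
  omega

theorem stmt_12 {V : Type*} [Fintype V] (G : SimpleGraph V) (hG : G.Connected)
    (U : Set V) (hU : SelfContained G U) (S : Set V) (hSU : S ⊆ U)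
    (a : V) (ha : a ∈ Wset G U S) (x : V) (hx : x ∈ cluster G U S a) :
    (G.induce (U \ S)).Reachable ⟨a, ⟨ha.1.2, ha.2⟩⟩ ⟨x, hx.1⟩ :=
  stmt_12_general G hG U hU S a ha x hx
end
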